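/- The polynomials p_n(b,x) = Σ_{j=0}^n (-1)^{n-j}·C(n+j,2j)·(2n/(n+j))·x^j + b·Σ_{j=0}^n (-1)^{n-j}·C(n+j,2j+1)·((2n-1)/(n+j))·x^j satisfy the three-term recurrence p_n(b,x) = (x - s_{n-1})·p_{n-1}(b,x) - t_{n-2}·p_{n-2}(b,x) for n ≥ 2, where s_0 = b+2, s_m = 2 for m ≥ 1, t_0 = 2-b, t_m = 1 for m ≥ 1; with p_0(b,x) = 1 and p_1(b,x) = x - (b+2). -/

import Mathlib

open Polynomial Finset

/-!
With `N = n + j`, the identity `C(N, r) (2N - r) / N = C(N, r) + C(N - 1, r)` turns `pₙ`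
(for `n ≥ 1`) into `(M₀ n - M₀ (n - 1)) + b (M₁ n - M₁ (n - 1))`, where
`Mₖ n = ∑ⱼ (-1)ⁿ⁺ʲ C(n + j, 2j + k) Xʲ`. By Pascal's rule each `Mₖ` with `k ≤ 1` satisfies
`M (n + 2) = (X - 2) M (n + 1) - M n`, hence so does `pₙ` from `n = 3` on. At `n = 2` the
recurrence needs the value `2 - b` of that expression at `n = 0` instead of `p₀ = 1`, which is
where `t₀ = 2 - b` comes from.
-/

/-- pₙ(b,x), where the degenerate case n = 0 is p₀ = 1 by convention. -/
noncomputable def pPoly (b : ℚ) : ℕ → Polynomial ℚ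
  | 0 => 1
  | (n + 1) =>
      (∑ j ∈ Finset.range (n + 2),
        Polynomial.C ((-1 : ℚ) ^ (n + 1 - j) * ((n + 1 + j).choose (2 * j) : ℚ) *
            ((2 * (n + 1) : ℚ) / ((n + 1 + j : ℕ) : ℚ))) * X ^ j) +
      Polynomial.C b *
      (∑ j ∈ Finset.range (n + 2),
        Polynomial.C ((-1 : ℚ) ^ (n + 1 - j) * ((n + 1 + j).choose (2 * j + 1) : ℚ) *
            ((2 * (n + 1) - 1 : ℚ) / ((n + 1 + j : ℕ) : ℚ))) * X ^ j)

lemma neg_one_pow_sub_eq_pow_add {R : Type*} [Monoid R] [HasDistribNeg R] {m n : ℕ} (h : n ≤ m) :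
    (-1 : R) ^ (m - n) = (-1) ^ (m + n) := by
  obtain ⟨d, rfl⟩ := Nat.exists_eq_add_of_le h
  rw [Nat.add_sub_cancel_left, show n + d + n = 2 * n + d by ring, pow_add, pow_mul, neg_one_sq,
    one_pow, one_mul]

lemma Nat.choose_add_two_add_choose (m r : ℕ) :
    (m + 2).choose (r + 2) + m.choose (r + 2) = m.choose r + 2 * (m + 1).choose (r + 2) := by
  simp only [Nat.choose_succ_succ]
  ring

lemma Nat.cast_choose_pred_mul {K : Type*} [Ring K] (N r : ℕ) :
    ((N - 1).choose r : K) * N = N.choose r * (N - r) := by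
  rcases N with _ | m
  · cases r <;> simp
  rcases le_or_gt r (m + 1) with h | h
  · have := congrArg (Nat.cast : ℕ → K) (Nat.choose_mul_succ_eq m r)
    push_cast [Nat.cast_sub h] at this
    simpa using this
  · rw [Nat.choose_eq_zero_of_lt h, Nat.choose_eq_zero_of_lt (by omega)]
    simp

lemma Nat.cast_choose_mul_div_eq_add_choose_pred {K : Type*} [Field K] [CharZero K] (N r : ℕ)
    (hN : N ≠ 0) : (N.choose r : K) * ((2 * N - r) / N) = N.choose r + (N - 1).choose r := by
  have hN' : (N : K) ≠ 0 := Nat.cast_ne_zero.mpr hN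
  have := Nat.cast_choose_pred_mul (K := K) N r
  rw [mul_div_assoc', div_eq_iff hN']
  linear_combination -this

-- `(-1)ⁿ bₙ(-X)` for `k = 0` and `(-1)ⁿ Bₙ₋₁(-X)` for `k = 1`, in terms of the Morgan–Voyce
-- polynomials `bₙ`, `Bₙ`.
noncomputable def morganVoyce (k n : ℕ) : ℚ[X] :=
  ∑ j ∈ range (n + 1), C ((-1) ^ (n + j) * ((n + j).choose (2 * j + k) : ℚ)) * X ^ j

lemma coeff_morganVoyce (k n j : ℕ) :
    (morganVoyce k n).coeff j = (-1) ^ (n + j) * ((n + j).choose (2 * j + k) : ℚ) := by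
  simp only [morganVoyce, finsetSum_coeff, coeff_C_mul_X_pow, sum_ite_eq, mem_range]
  split_ifs with h
  · rfl
  · rw [Nat.choose_eq_zero_of_lt (by omega), Nat.cast_zero, mul_zero]

lemma morganVoyce_add_two (k n : ℕ) (hk : k ≤ 1) :
    morganVoyce k (n + 2) = (X - C 2) * morganVoyce k (n + 1) - morganVoyce k n := by
  ext (_ | j)
  · simp only [coeff_sub, sub_mul, mul_coeff_zero, coeff_X_zero, coeff_C_zero, coeff_morganVoyce]
    interval_cases k <;> simp [pow_succ] <;> ring
  · have pascal := congrArg (Nat.cast : ℕ → ℚ)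
      (Nat.choose_add_two_add_choose (n + j + 1) (2 * j + k))
    push_cast at pascal
    simp only [coeff_sub, sub_mul, coeff_X_mul, coeff_C_mul, coeff_morganVoyce]
    rw [show n + 2 + (j + 1) = n + j + 1 + 2 by ring, show n + 1 + j = n + j + 1 by ring,
      show n + (j + 1) = n + j + 1 by ring, show n + 1 + (j + 1) = n + j + 1 + 1 by ring,
      show 2 * (j + 1) + k = 2 * j + k + 2 by ring]
    linear_combination (-1) ^ (n + j + 1) * pascal

lemma morganVoyce_zero_zero : morganVoyce 0 0 = 1 := by simp [morganVoyce]

lemma morganVoyce_zero_one : morganVoyce 0 1 = X - 1 := by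
  simp [morganVoyce, sum_range_succ]
  ring

lemma morganVoyce_one_zero : morganVoyce 1 0 = 0 := by simp [morganVoyce]

lemma morganVoyce_one_one : morganVoyce 1 1 = -1 := by simp [morganVoyce, sum_range_succ]

lemma morganVoyce_eq_sum_range_add_two (k n : ℕ) :
    morganVoyce k n =
      ∑ j ∈ range (n + 2), C ((-1) ^ (n + j) * ((n + j).choose (2 * j + k) : ℚ)) * X ^ j := by
  rw [morganVoyce, sum_range_succ _ (n + 1), Nat.choose_eq_zero_of_lt (by omega)]
  simp

lemma pPoly_term_eq_sub (n j k : ℕ) (hj : j < n + 2) :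
    (-1 : ℚ) ^ (n + 1 - j) * ((n + 1 + j).choose (2 * j + k) : ℚ) *
        ((2 * (n + 1) - k : ℚ) / ((n + 1 + j : ℕ) : ℚ)) =
      (-1) ^ (n + 1 + j) * ((n + 1 + j).choose (2 * j + k) : ℚ) -
        (-1) ^ (n + j) * ((n + j).choose (2 * j + k) : ℚ) := by
  have key := Nat.cast_choose_mul_div_eq_add_choose_pred (K := ℚ) (n + 1 + j) (2 * j + k)
    (by omega)
  rw [show n + 1 + j - 1 = n + j by omega] at key
  rw [neg_one_pow_sub_eq_pow_add (by omega), mul_assoc, show (2 * (n + 1) - k : ℚ) =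
    2 * ((n + 1 + j : ℕ) : ℚ) - ((2 * j + k : ℕ) : ℚ) by push_cast; ring, key,
    show n + 1 + j = n + j + 1 by ring, pow_succ]
  ring

lemma pPoly_succ (b : ℚ) (n : ℕ) :
    pPoly b (n + 1) = morganVoyce 0 (n + 1) - morganVoyce 0 n +
      C b * (morganVoyce 1 (n + 1) - morganVoyce 1 n) := by
  rw [pPoly, morganVoyce_eq_sum_range_add_two 0 n, morganVoyce_eq_sum_range_add_two 1 n,
    morganVoyce, morganVoyce, ← sum_sub_distrib, ← sum_sub_distrib]
  congr 1
  · refine sum_congr rfl fun j hj => ?_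
    rw [← sub_mul, ← C_sub, ← pPoly_term_eq_sub n j 0 (mem_range.mp hj)]
    simp
  · congr 1
    refine sum_congr rfl fun j hj => ?_
    rw [← sub_mul, ← C_sub, ← pPoly_term_eq_sub n j 1 (mem_range.mp hj)]
    simp

lemma pPoly_zero (b : ℚ) : pPoly b 0 = 1 := rfl

lemma pPoly_one (b : ℚ) : pPoly b 1 = X - C (b + 2) := by
  rw [pPoly_succ, morganVoyce_zero_one, morganVoyce_zero_zero, morganVoyce_one_one,
    morganVoyce_one_zero, map_add, map_ofNat]
  ring

lemma pPoly_two (b : ℚ) : pPoly b 2 = (X - C 2) * pPoly b 1 - C (2 - b) * pPoly b 0 := by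
  rw [pPoly_succ, pPoly_one, pPoly_zero, morganVoyce_add_two 0 0 zero_le_one,
    morganVoyce_add_two 1 0 le_rfl, morganVoyce_zero_one, morganVoyce_zero_zero,
    morganVoyce_one_one, morganVoyce_one_zero, map_sub, map_add, map_ofNat]
  ring

lemma pPoly_add_three (b : ℚ) (n : ℕ) :
    pPoly b (n + 3) = (X - C 2) * pPoly b (n + 2) - pPoly b (n + 1) := by
  rw [pPoly_succ, pPoly_succ, pPoly_succ]
  linear_combination
    morganVoyce_add_two 0 (n + 1) zero_le_one - morganVoyce_add_two 0 n zero_le_one +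
      C b * (morganVoyce_add_two 1 (n + 1) le_rfl - morganVoyce_add_two 1 n le_rfl)

theorem stmt_18 (b : ℚ) :
    pPoly b 0 = 1 ∧ pPoly b 1 = X - Polynomial.C (b + 2) ∧
      ∀ n : ℕ, 2 ≤ n →
        pPoly b n = (X - Polynomial.C (2 : ℚ)) * pPoly b (n - 1) -
          Polynomial.C (if n = 2 then 2 - b else 1) * pPoly b (n - 2) := by
  refine ⟨pPoly_zero b, pPoly_one b, fun n hn => ?_⟩
  match n, hn with
  | 2, _ => exact pPoly_two b
  | m + 3, _ => simpa using pPoly_add_three b m
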